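/- Total displacement of (n,m)-parking functions is permutation-invariant: if α ∈ PF_{n,m} and π ∈ S_n, then d(α) = d(π(α)). -/

import Mathlib

/-- Sequential parking process on a street with `m` spots: given the list of
preferences of the cars (in arrival order) and the set of already occupied
spots, return the list of spots in which the cars park (in arrival order),
or `none` if some car fails to park. Car with preference `a` parks in the
first unoccupied spot `j` with `a ≤ j ≤ m`. -/
def park (m : ℕ) : List ℕ → Finset ℕ → Option (List ℕ)
  | [], _ => some []
  | a :: as, occ =>
    match ((List.range' a (m + 1 - a)).filter fun j => decide (j ∉ occ)).head? with
    | none => none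
    | some p => (park m as (insert p occ)).map (p :: ·)

/-- `α` is an `(n, m)`-parking function: `n` cars with preferences in `[m]`,
all of which park successfully. -/
def IsPF (n m : ℕ) (α : List ℕ) : Prop :=
  α.length = n ∧ (∀ a ∈ α, 1 ≤ a ∧ a ≤ m) ∧ (park m α ∅).isSome

/-- Total displacement: the sum over cars of (parking spot − preference). -/
def disp (m : ℕ) (α : List ℕ) : ℕ :=
  match park m α ∅ with
  | some ps => ((ps.zip α).map fun x => x.1 - x.2).sum
  | none => 0

/-- The set of spots occupied at the end of the parking process. -/
def occSet (m : ℕ) (α : List ℕ) : Finset ℕ :=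
  match park m α ∅ with
  | some ps => ps.toFinset
  | none => ∅

/-- The characteristic function of the parking game of `α`: the total
displacement of the sub-tuple of preferences indexed by the coalition `S`,
parked on a street with `n` spots. -/
def gameCost (n : ℕ) (α : Fin n → ℕ) (S : Finset (Fin n)) : ℕ :=
  disp n ((S.sort (· ≤ ·)).map α)

/-- The Shapley value of a coalitional cost game `c` on players `Fin n`. -/
noncomputable def shapley (n : ℕ) (c : Finset (Fin n) → ℕ) (i : Fin n) : ℚ :=
  (1 / (n.factorial : ℚ)) * ∑ π : Equiv.Perm (Fin n),
    ((c (Finset.univ.filter fun j => π j ≤ π i) : ℚ) -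
     (c (Finset.univ.filter fun j => π j < π i) : ℚ))

/-!
The multiset of spots taken by the cars does not depend on their arrival order. It suffices to
swap two consecutive cars with first free spots `p` and `p'`: if `p ≠ p'` they take the same two
spots in the other order, and if `p = p'` the later of the two takes the first free spot after
`p`, whichever car it is. Since every car parks at or after its preference, `d(α)` is the sum of
the occupied spots minus the sum of the preferences, and both sums are invariant.
-/

lemma head?_filter_range'_eq_some_iff (P : ℕ → Bool) (a k p : ℕ) :
    ((List.range' a k).filter P).head? = some p ↔
      P p ∧ a ≤ p ∧ p < a + k ∧ ∀ j, a ≤ j → j < p → ¬ P j := by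
  induction k generalizing a with
  | zero =>
    simp only [List.range'_zero, List.filter_nil, List.head?_nil, reduceCtorEq, false_iff]
    omega
  | succ k ih =>
    rw [List.range'_succ, List.filter_cons]
    by_cases hPa : P a
    · simp only [hPa, if_true, List.head?_cons, Option.some_inj]
      constructor
      · rintro rfl
        exact ⟨hPa, le_rfl, by omega, fun j _ _ => by omega⟩
      · rintro ⟨-, hap, -, hmin⟩
        by_contra hne
        exact hmin a le_rfl (by omega) hPa
    · simp only [hPa, Bool.false_eq_true, if_false, ih]
      constructor
      · rintro ⟨hp, hap, hpk, hmin⟩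
        refine ⟨hp, by omega, by omega, fun j hj hjp => ?_⟩
        rcases hj.eq_or_lt with rfl | hlt
        · exact hPa
        · exact hmin j hlt hjp
      · rintro ⟨hp, hap, hpk, hmin⟩
        have : p ≠ a := by rintro rfl; exact hPa hp
        exact ⟨hp, by omega, by omega, fun j hj => hmin j (by omega)⟩

lemma sum_map_sub_zip_of_forall₂_le {l ps : List ℕ} (h : List.Forall₂ (· ≤ ·) l ps) :
    ((ps.zip l).map fun x => x.1 - x.2).sum = ps.sum - l.sum := by
  induction h with
  | nil => rfl
  | @cons a p as qs hap hrest ih =>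
    have := hrest.sum_le_sum
    simp only [List.zip_cons_cons, List.map_cons, List.sum_cons, ih]
    omega

def firstFree (m : ℕ) (occ : Finset ℕ) (a : ℕ) : Option ℕ :=
  ((List.range' a (m + 1 - a)).filter fun j => decide (j ∉ occ)).head?

section firstFree

variable {m a p : ℕ} {occ : Finset ℕ}

lemma firstFree_eq_some_iff :
    firstFree m occ a = some p ↔ p ∉ occ ∧ a ≤ p ∧ p ≤ m ∧ ∀ j, a ≤ j → j < p → j ∈ occ := by
  rw [firstFree, head?_filter_range'_eq_some_iff]
  simp only [decide_not, Bool.not_eq_true', decide_eq_false_iff_not, not_not]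
  constructor <;> rintro ⟨hp, hap, hpm, hmin⟩ <;> exact ⟨hp, hap, by omega, hmin⟩

lemma firstFree_eq_none_iff : firstFree m occ a = none ↔ ∀ j, a ≤ j → j ≤ m → j ∈ occ := by
  rw [firstFree, List.head?_eq_none_iff, List.filter_eq_nil_iff]
  simp only [List.mem_range', decide_eq_true_eq, not_not]
  constructor
  · intro h j haj hjm
    exact h j ⟨j - a, by omega, by omega⟩
  · rintro h _ ⟨i, hi, rfl⟩
    exact h _ (by omega) (by omega)

lemma firstFree_insert_of_eq_none (h : firstFree m occ a = none) (q : ℕ) :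
    firstFree m (insert q occ) a = none := by
  rw [firstFree_eq_none_iff] at h ⊢
  exact fun j haj hjm => Finset.mem_insert_of_mem (h j haj hjm)

lemma firstFree_insert_of_ne {q : ℕ} (h : firstFree m occ a = some p) (hq : q ≠ p) :
    firstFree m (insert q occ) a = some p := by
  obtain ⟨hp, hap, hpm, hmin⟩ := firstFree_eq_some_iff.mp h
  rw [firstFree_eq_some_iff, Finset.mem_insert, not_or]
  exact ⟨⟨hq.symm, hp⟩, hap, hpm, fun j haj hjp => Finset.mem_insert_of_mem (hmin j haj hjp)⟩

lemma firstFree_insert_self (h : firstFree m occ a = some p) :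
    firstFree m (insert p occ) a = firstFree m occ (p + 1) := by
  obtain ⟨hp, hap, -, hmin⟩ := firstFree_eq_some_iff.mp h
  ext q
  simp only [firstFree_eq_some_iff, Finset.mem_insert, not_or]
  constructor
  · rintro ⟨⟨hqp, hq⟩, haq, hqm, hminq⟩
    have hpq : p < q := by
      by_contra! hqp'
      exact hq (hmin q haq (lt_of_le_of_ne hqp' hqp))
    refine ⟨hq, hpq, hqm, fun j hpj hjq => ?_⟩
    exact (hminq j (by omega) hjq).resolve_left (by omega)
  · rintro ⟨hq, hpq, hqm, hminq⟩
    refine ⟨⟨by omega, hq⟩, by omega, hqm, fun j haj hjq => ?_⟩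
    rcases lt_trichotomy j p with hjp | rfl | hpj
    · exact Or.inr (hmin j haj hjp)
    · exact Or.inl rfl
    · exact Or.inr (hminq j hpj hjq)

end firstFree

lemma park_cons (m a : ℕ) (as : List ℕ) (occ : Finset ℕ) :
    park m (a :: as) occ =
      (firstFree m occ a).bind fun p => (park m as (insert p occ)).map (p :: ·) := by
  rw [park, firstFree]
  cases ((List.range' a (m + 1 - a)).filter fun j => decide (j ∉ occ)).head? <;> rfl

lemma park_cons_map_coe (m a : ℕ) (as : List ℕ) (occ : Finset ℕ) :
    (park m (a :: as) occ).map ((↑) : List ℕ → Multiset ℕ) =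
      (firstFree m occ a).bind fun p =>
        ((park m as (insert p occ)).map ((↑) : List ℕ → Multiset ℕ)).map (p ::ₘ ·) := by
  rw [park_cons, Option.map_bind]
  simp only [Option.map_map, Function.comp_def, Multiset.cons_coe]

lemma park_swap_map_coe (m a b : ℕ) (as : List ℕ) (occ : Finset ℕ) :
    (park m (a :: b :: as) occ).map ((↑) : List ℕ → Multiset ℕ) =
      (park m (b :: a :: as) occ).map ((↑) : List ℕ → Multiset ℕ) := by
  simp only [park_cons_map_coe]
  cases ha : firstFree m occ a with
  | none => cases firstFree m occ b <;> simp [firstFree_insert_of_eq_none ha]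
  | some p =>
    cases hb : firstFree m occ b with
    | none => simp [firstFree_insert_of_eq_none hb]
    | some p' =>
      by_cases hpp' : p = p'
      · subst hpp'
        simp [firstFree_insert_self ha, firstFree_insert_self hb]
      · simp only [firstFree_insert_of_ne ha (Ne.symm hpp'), firstFree_insert_of_ne hb hpp',
          Option.bind_some, Option.map_map, Function.comp_def, Finset.insert_comm p p',
          Multiset.cons_swap p p']

lemma park_map_coe_eq_of_perm (m : ℕ) {l l' : List ℕ} (h : l.Perm l') (occ : Finset ℕ) :
    (park m l occ).map ((↑) : List ℕ → Multiset ℕ) =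
      (park m l' occ).map ((↑) : List ℕ → Multiset ℕ) := by
  induction h generalizing occ with
  | nil => rfl
  | cons a _ ih => simp only [park_cons_map_coe, ih]
  | swap a b as => exact park_swap_map_coe m b a as occ
  | trans _ _ ih₁ ih₂ => rw [ih₁, ih₂]

lemma forall₂_le_of_park_eq_some {m : ℕ} {l ps : List ℕ} {occ : Finset ℕ}
    (h : park m l occ = some ps) : List.Forall₂ (· ≤ ·) l ps := by
  induction l generalizing occ ps with
  | nil =>
    obtain rfl : ps = [] := by simpa [park] using h.symm
    exact .nil
  | cons a as ih =>
    rw [park_cons, Option.bind_eq_some_iff] at h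
    obtain ⟨p, hp, h⟩ := h
    obtain ⟨qs, hqs, rfl⟩ := Option.map_eq_some_iff.mp h
    exact .cons (firstFree_eq_some_iff.mp hp).2.1 (ih hqs)

lemma disp_eq_of_park_eq_some {m : ℕ} {l ps : List ℕ} (h : park m l ∅ = some ps) :
    disp m l = ps.sum - l.sum := by
  rw [disp, h]
  exact sum_map_sub_zip_of_forall₂_le (forall₂_le_of_park_eq_some h)

lemma disp_eq_of_perm (m : ℕ) {l l' : List ℕ} (h : l.Perm l') : disp m l = disp m l' := by
  have hspots := park_map_coe_eq_of_perm m h ∅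
  cases hl : park m l ∅ with
  | none =>
    rw [hl, Option.map_none, eq_comm, Option.map_eq_none_iff] at hspots
    rw [disp, disp, hl, hspots]
  | some ps =>
    rw [hl, Option.map_some, eq_comm, Option.map_eq_some_iff] at hspots
    obtain ⟨ps', hl', hps⟩ := hspots
    rw [disp_eq_of_park_eq_some hl, disp_eq_of_park_eq_some hl', h.sum_eq,
      (Multiset.coe_eq_coe.mp hps).sum_eq]

theorem stmt9_general (n m : ℕ) (α : Fin n → ℕ) (π : Equiv.Perm (Fin n)) :
    disp m (List.ofFn α) = disp m (List.ofFn fun i => α (π.symm i)) :=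
  disp_eq_of_perm m (Equiv.Perm.ofFn_comp_perm π.symm α).symm

/-- total displacement of `(n,m)`-parking functions is
permutation-invariant: `d(α) = d(π(α))`. -/
theorem stmt9 (n m : ℕ) (hnm : n ≤ m) (α : Fin n → ℕ) (π : Equiv.Perm (Fin n))
    (h : IsPF n m (List.ofFn α)) :
    disp m (List.ofFn α) = disp m (List.ofFn fun i => α (π.symm i)) :=
  stmt9_general n m α π
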